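/- arXiv:2207.13636 — 5 statements merged into one kernel-verified Lean document; each statement's English description precedes it below -/
import Mathlib

section
/- For every α in (0,1), the cubic polynomial R_α(w) = w³ − 8w² + 8(3 − 2α)w + 16(α − 1) has exactly one real root in the open interval (0,1). -/
theorem stmt_1 (α : ℝ) (hα : α ∈ Set.Ioo (0 : ℝ) 1) :
    ∃! w : ℝ, w ∈ Set.Ioo (0 : ℝ) 1 ∧
      w ^ 3 - 8 * w ^ 2 + 8 * (3 - 2 * α) * w + 16 * (α - 1) = 0 := by
  obtain ⟨hα0, hα1⟩ := hα
  set f : ℝ → ℝ := fun w => w ^ 3 - 8 * w ^ 2 + 8 * (3 - 2 * α) * w + 16 * (α - 1)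
    with hf
  have hcont : ContinuousOn f (Set.Icc (0 : ℝ) 1) := by
    apply Continuous.continuousOn; fun_prop
  have h0 : f 0 < 0 := by simp [hf]; nlinarith
  have h1 : (0 : ℝ) < f 1 := by simp [hf]; nlinarith
  have hmem : (0 : ℝ) ∈ Set.Ioo (f 0) (f 1) := ⟨h0, h1⟩
  have := intermediate_value_Ioo (by norm_num : (0:ℝ) ≤ 1) hcont hmem
  obtain ⟨w, hw, hfw⟩ := this
  refine ⟨w, ⟨hw, hfw⟩, ?_⟩
  rintro b ⟨⟨hb0, hb1⟩, hb⟩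
  obtain ⟨hw0, hw1⟩ := hw
  by_contra hne
  have ha : w ^ 3 - 8 * w ^ 2 + 8 * (3 - 2 * α) * w + 16 * (α - 1) = 0 := hfw
  have h1' : (w - b) * (b^2 + b*w + w^2 - 8*(b+w) + 24 - 16*α) = 0 := by
    linear_combination ha - hb
  have hne' : w - b ≠ 0 := sub_ne_zero.mpr (Ne.symm hne)
  have h2 : b^2 + b*w + w^2 - 8*(b+w) + 24 - 16*α = 0 :=
    (mul_eq_zero.mp h1').resolve_left hne'
  have h3 : b^2*(1-w) + w^2*(1-b) + b*w + 8*(1-b)*(1-w) = 0 := by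
    linear_combination hb + (1 - b) * h2
  nlinarith [mul_pos (sub_pos.mpr hb1) (sub_pos.mpr hw1), mul_pos hb0 hw0,
    mul_pos (mul_pos hb0 hb0) (sub_pos.mpr hw1),
    mul_pos (mul_pos hw0 hw0) (sub_pos.mpr hb1)]
end

section
/- For α ∈ (0,1), the equation 4·√((1−αw)(1−w)) = (w−2)² has exactly one solution w ∈ (0,1). -/
/-!
Squaring turns the equation into `16 (1 - α w)(1 - w) = (w - 2)⁴`, which is linear in `α`;
dividing by `w` shows that `w ∈ (0,1)` is a solution exactly when `α = rootParam w`.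
The function `rootParam` equals `1` at `0`, is negative at `15/16` and is strictly decreasing
on `(-∞, 1)`, so it takes every value of `(0,1)` exactly once on `(0,1)`.
-/

open Set

noncomputable def rootParam (w : ℝ) : ℝ :=
  (w ^ 2 - 7 * w + 17) / 16 - 1 / (16 * (1 - w))

lemma rootParam_eq_iff {α w : ℝ} (hw0 : w ≠ 0) (hw1 : w ≠ 1) :
    rootParam w = α ↔ 16 * (1 - α * w) * (1 - w) = (w - 2) ^ 4 := by
  have h1w : 1 - w ≠ 0 := sub_ne_zero.mpr hw1.symm
  rw [rootParam, div_sub_div _ _ (by norm_num) (by simpa using h1w), div_eq_iff (by simpa using h1w)]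
  constructor
  · intro h
    linear_combination (w / 16) * h
  · intro h
    refine mul_left_cancel₀ hw0 ?_
    linear_combination 16 * h

lemma sqrt_eq_iff_rootParam_eq {α w : ℝ} (hw0 : w ≠ 0) (hw1 : w ≠ 1) (hw2 : w ≠ 2) :
    4 * √((1 - α * w) * (1 - w)) = (w - 2) ^ 2 ↔ rootParam w = α := by
  have hpos : 0 < (w - 2) ^ 2 / 4 := by
    have : w - 2 ≠ 0 := sub_ne_zero.mpr hw2
    positivity
  rw [rootParam_eq_iff hw0 hw1, mul_comm, ← eq_div_iff four_ne_zero,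
    Real.sqrt_eq_iff_mul_self_eq_of_pos hpos]
  constructor
  · intro h
    linear_combination (-16) * h
  · intro h
    linear_combination (-1 / 16) * h

lemma strictAntiOn_rootParam : StrictAntiOn rootParam (Iio 1) := by
  intro a ha b hb hab
  have h1a : 0 < 1 - a := sub_pos.mpr ha
  have h1b : 0 < 1 - b := sub_pos.mpr hb
  have hdiff : rootParam a - rootParam b =
      (b - a) * (7 - a - b + 1 / ((1 - a) * (1 - b))) / 16 := by
    rw [rootParam, rootParam]
    field_simp
    ring
  have h7 : 0 < 7 - a - b := by linarith
  have hba : 0 < b - a := sub_pos.mpr hab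
  have hpos : 0 < rootParam a - rootParam b := by
    rw [hdiff]
    positivity
  linarith

lemma continuousOn_rootParam : ContinuousOn rootParam (Iio 1) := by
  refine ContinuousOn.sub (by fun_prop) (continuousOn_const.div (by fun_prop) ?_)
  intro w hw
  have : 0 < 1 - w := sub_pos.mpr hw
  positivity

lemma exists_mem_Ioo_rootParam_eq {α : ℝ} (hα : α ∈ Ioo (0 : ℝ) 1) :
    ∃ w ∈ Ioo (0 : ℝ) 1, rootParam w = α := by
  have hcont : ContinuousOn rootParam (Icc 0 (15 / 16)) :=
    continuousOn_rootParam.mono fun w hw => by simp only [mem_Iio]; linarith [hw.2]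
  have hα' : α ∈ Ioo (rootParam (15 / 16)) (rootParam 0) := by
    constructor <;> norm_num [rootParam] <;> linarith [hα.1, hα.2]
  obtain ⟨w, hw, hFw⟩ := intermediate_value_Ioo' (by norm_num) hcont hα'
  exact ⟨w, ⟨hw.1, hw.2.trans (by norm_num)⟩, hFw⟩

theorem stmt_3 (α : ℝ) (hα : α ∈ Set.Ioo (0 : ℝ) 1) :
    ∃! w : ℝ, w ∈ Set.Ioo (0 : ℝ) 1 ∧
      4 * Real.sqrt ((1 - α * w) * (1 - w)) = (w - 2) ^ 2 := by
  have key : ∀ w ∈ Ioo (0 : ℝ) 1,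
      (4 * √((1 - α * w) * (1 - w)) = (w - 2) ^ 2 ↔ rootParam w = α) := fun w hw =>
    sqrt_eq_iff_rootParam_eq hw.1.ne' hw.2.ne (by linarith [hw.2])
  obtain ⟨w, hw, hFw⟩ := exists_mem_Ioo_rootParam_eq hα
  refine ⟨w, ⟨hw, (key w hw).2 hFw⟩, fun y ⟨hy, hey⟩ => ?_⟩
  exact strictAntiOn_rootParam.injOn hy.2 hw.2 (((key y hy).1 hey).trans hFw.symm)
end

section
/- For α ∈ (0,1), the free-boundary characteristic function χ(Λ) := 4√(1−αΛ)·√(1−Λ) − (2−Λ)² (for Λ ∈ (0,1)) satisfies χ(μΛ/μ) = tilde-R_α(Λ) where tilde-R_α(w) = 4√((1−αw)(1−w)) − (w−2)², and χ has exactly one zero in (0,1), located at Λ = γ_R², the unique root in (0,1) of R_α(w)=0. -/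
theorem stmt_8 (α γsq : ℝ) (hα : α ∈ Set.Ioo (0 : ℝ) 1)
    (hγ : γsq ∈ Set.Ioo (0 : ℝ) 1)
    (hroot : γsq ^ 3 - 8 * γsq ^ 2 + 8 * (3 - 2 * α) * γsq + 16 * (α - 1) = 0)
    (huniq : ∀ w ∈ Set.Ioo (0 : ℝ) 1,
      w ^ 3 - 8 * w ^ 2 + 8 * (3 - 2 * α) * w + 16 * (α - 1) = 0 → w = γsq) :
    (∀ Λ ∈ Set.Ioo (0 : ℝ) 1,
      4 * Real.sqrt ((1 - α * Λ) * (1 - Λ)) - (2 - Λ) ^ 2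
        = 4 * Real.sqrt ((1 - α * Λ) * (1 - Λ)) - (Λ - 2) ^ 2) ∧
    (∀ Λ ∈ Set.Ioo (0 : ℝ) 1,
      (4 * Real.sqrt ((1 - α * Λ) * (1 - Λ)) - (2 - Λ) ^ 2 = 0 ↔ Λ = γsq)) := by
  obtain ⟨hα0, hα1⟩ := hα
  constructor
  · intro Λ _
    ring_nf
  · intro Λ hΛ
    obtain ⟨hΛ0, hΛ1⟩ := hΛ
    have hprod : (0:ℝ) ≤ (1 - α * Λ) * (1 - Λ) :=
      mul_nonneg (by nlinarith [mul_le_of_le_one_right hα0.le hΛ1.le]) (by linarith)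
    constructor
    · intro h
      have hs : Real.sqrt ((1 - α * Λ) * (1 - Λ)) = (2 - Λ) ^ 2 / 4 := by linarith
      have hsq : (1 - α * Λ) * (1 - Λ) = ((2 - Λ) ^ 2 / 4) ^ 2 := by
        rw [← hs, Real.sq_sqrt hprod]
      have hR : Λ ^ 3 - 8 * Λ ^ 2 + 8 * (3 - 2 * α) * Λ + 16 * (α - 1) = 0 := by
        have : Λ * (Λ ^ 3 - 8 * Λ ^ 2 + 8 * (3 - 2 * α) * Λ + 16 * (α - 1)) = 0 := by
          nlinarith [hsq]
        rcases mul_eq_zero.mp this with h0 | h0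
        · exact absurd h0 (ne_of_gt hΛ0)
        · exact h0
      exact huniq Λ ⟨hΛ0, hΛ1⟩ hR
    · rintro rfl
      have hsq : (1 - α * Λ) * (1 - Λ) = ((2 - Λ) ^ 2 / 4) ^ 2 := by nlinarith [hroot]
      have hs : Real.sqrt ((1 - α * Λ) * (1 - Λ)) = (2 - Λ) ^ 2 / 4 := by
        rw [hsq, Real.sqrt_sq (by positivity)]
      rw [hs]; ring
end

section
/- For α ∈ (0,1) and k ≥ 1, integrating by parts gives ∫₁^{1/α} arctan(√((1−αt)(t−1)))/t^{k+1} dt = (1/(2k)) ∫₁^{1/α} (1/t^{k+1}) · ((2t − (α+1)/α)/(t − (α+1)/α)) · 1/√((1−αt)(t−1)) dt, using that the arctan factor vanishes at both endpoints t = 1 and t = 1/α. -/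
/-!
Integrate by parts against `v t = -1 / (k t ^ k)`: the boundary terms vanish because
`(1 - α t)(t - 1)` vanishes at both ends, and the derivative of `arctan √((1 - α t)(t - 1))`
takes the stated form because `1 + (1 - α t)(t - 1) = α t ((α + 1) / α - t)`. That derivative
blows up at both endpoints, but it changes sign only once, so it is integrable as the derivative
of a function that is continuous and monotone on each of two pieces.
-/
open Real Set MeasureTheory

theorem intervalIntegrable_deriv_of_nonneg_of_nonpos {g g' : ℝ → ℝ} {a b c : ℝ}
    (hac : a ≤ c) (hcb : c ≤ b) (hcont : ContinuousOn g (Icc a b))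
    (hderiv : ∀ x ∈ Ioo a b, HasDerivAt g (g' x) x)
    (hpos : ∀ x ∈ Ioo a c, 0 ≤ g' x) (hneg : ∀ x ∈ Ioo c b, g' x ≤ 0) :
    IntervalIntegrable g' volume a b := by
  have left : IntervalIntegrable g' volume a c := by
    refine intervalIntegral.intervalIntegrable_deriv_of_nonneg (hcont.mono ?_)
      (fun x hx => hderiv x ?_) ?_
    · rw [uIcc_of_le hac]; exact Icc_subset_Icc_right hcb
    · rw [min_eq_left hac, max_eq_right hac] at hx; exact ⟨hx.1, hx.2.trans_le hcb⟩
    · rwa [min_eq_left hac, max_eq_right hac]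
  have right : IntervalIntegrable (fun x => -g' x) volume c b := by
    refine intervalIntegral.intervalIntegrable_deriv_of_nonneg (g := fun x => -g x)
      (hcont.mono ?_).neg (fun x hx => (hderiv x ?_).neg) ?_
    · rw [uIcc_of_le hcb]; exact Icc_subset_Icc_left hac
    · rw [min_eq_left hcb, max_eq_right hcb] at hx; exact ⟨hac.trans_lt hx.1, hx.2⟩
    · rw [min_eq_left hcb, max_eq_right hcb]
      exact fun x hx => neg_nonneg.mpr (hneg x hx)
  exact left.trans (by simpa only [Pi.neg_def, neg_neg] using right.neg)

theorem integral_div_pow_succ_eq_of_eq_zero {u u' : ℝ → ℝ} {a b : ℝ} {k : ℕ} (hk : k ≠ 0)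
    (ha : 0 < a) (hab : a ≤ b) (hu : ContinuousOn u (Icc a b))
    (hderiv : ∀ x ∈ Ioo a b, HasDerivAt u (u' x) x) (hu' : IntervalIntegrable u' volume a b)
    (hua : u a = 0) (hub : u b = 0) :
    ∫ t in a..b, u t / t ^ (k + 1) = (1 / k) * ∫ t in a..b, u' t / t ^ k := by
  have hpos : ∀ x ∈ uIcc a b, x ≠ 0 := fun x hx =>
    (ha.trans_le (by rw [uIcc_of_le hab] at hx; exact hx.1)).ne'
  have hv : ∀ x ∈ uIcc a b,
      HasDerivAt (fun t : ℝ => -(1 / (k : ℝ)) * (t ^ k)⁻¹) (1 / x ^ (k + 1)) x := by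
    intro x hx
    refine (((hasDerivAt_pow k x).fun_inv (pow_ne_zero k (hpos x hx))).const_mul
      (-(1 / (k : ℝ)))).congr_deriv ?_
    rw [pow_succ x k, ← pow_sub_one_mul hk x]
    field_simp
  have hv' : IntervalIntegrable (fun x : ℝ => 1 / x ^ (k + 1)) volume a b :=
    ContinuousOn.intervalIntegrable fun x hx =>
      (continuousAt_const.div (continuousAt_pow _ _) (pow_ne_zero _ (hpos x hx))).continuousWithinAt
  have hibp := intervalIntegral.integral_mul_deriv_eq_deriv_mul_of_hasDerivAt
    (by rwa [uIcc_of_le hab]) (fun x hx => (hv x hx).continuousAt.continuousWithinAt)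
    (fun x hx => hderiv x (by rwa [min_eq_left hab, max_eq_right hab] at hx))
    (fun x hx => hv x (Ioo_subset_Icc_self hx)) hu' hv'
  simp only [hua, hub, zero_mul, sub_zero, zero_sub] at hibp
  calc ∫ t in a..b, u t / t ^ (k + 1)
      = ∫ t in a..b, u t * (1 / t ^ (k + 1)) := by simp only [div_eq_mul_one_div (u _)]
    _ = -∫ t in a..b, u' t * (-(1 / k) * (t ^ k)⁻¹) := hibp
    _ = (1 / k) * ∫ t in a..b, u' t / t ^ k := by
      rw [← intervalIntegral.integral_neg, ← intervalIntegral.integral_const_mul]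
      congr 1
      funext t
      ring

theorem hasDerivAt_arctan_sqrt_mul_sub {α t : ℝ} (hα : 0 < α) (ht : t ∈ Ioo 1 (1 / α)) :
    HasDerivAt (fun t => arctan √((1 - α * t) * (t - 1)))
      ((2 * t - (α + 1) / α) / (t - (α + 1) / α) * (1 / √((1 - α * t) * (t - 1))) / (2 * t))
      t := by
  obtain ⟨ht1, htα⟩ := ht
  have hαt : α * t < 1 := by rwa [lt_div_iff₀ hα, mul_comm] at htα
  have hP : 0 < (1 - α * t) * (t - 1) := mul_pos (by linarith) (by linarith)
  have hdP : HasDerivAt (fun t => (1 - α * t) * (t - 1)) (1 + α - 2 * α * t) t := by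
    refine (((hasDerivAt_id t).const_mul α).const_sub 1).mul ((hasDerivAt_id t).sub_const 1)
      |>.congr_deriv ?_
    simp only [id_eq]
    ring
  refine ((hdP.sqrt hP.ne').arctan).congr_deriv ?_
  have hsqrt : 0 < √((1 - α * t) * (t - 1)) := sqrt_pos.mpr hP
  have hden : 1 + (1 - α * t) * (t - 1) = α * t * ((α + 1) / α - t) := by field_simp; ring
  have hnum : 1 + α - 2 * α * t = α * ((α + 1) / α - 2 * t) := by field_simp; ring
  rw [sq_sqrt hP.le, hden, hnum]
  have hpole : (α + 1) / α - t ≠ 0 := by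
    rw [add_div, div_self hα.ne']
    linarith
  generalize (α + 1) / α = c at hpole ⊢
  rw [← neg_sub c t, div_neg]
  field_simp
  ring

theorem intervalIntegrable_deriv_arctan_sqrt_mul_sub {α : ℝ} (hα : α ∈ Ioo 0 1) :
    IntervalIntegrable (fun t => (2 * t - (α + 1) / α) / (t - (α + 1) / α) *
      (1 / √((1 - α * t) * (t - 1))) / (2 * t)) volume 1 (1 / α) := by
  obtain ⟨hα0, hα1⟩ := hα
  have hc : (α + 1) / α = 1 + 1 / α := by rw [add_div, div_self hα0.ne', add_comm]
  have h1α : 1 < 1 / α := by rwa [lt_div_iff₀ hα0, one_mul]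
  -- the derivative changes sign at the maximum `(α + 1) / (2 α)` of `(1 - α t)(t - 1)`
  refine intervalIntegrable_deriv_of_nonneg_of_nonpos (c := (α + 1) / α / 2) (by linarith)
    (by linarith) (by fun_prop) (fun t ht => hasDerivAt_arctan_sqrt_mul_sub hα0 ht) ?_ ?_
  · rintro t ⟨ht1, htc⟩
    have hratio : 0 ≤ (2 * t - (α + 1) / α) / (t - (α + 1) / α) :=
      div_nonneg_of_nonpos (by linarith) (by linarith)
    positivity
  · rintro t ⟨htc, htα⟩
    have hratio : (2 * t - (α + 1) / α) / (t - (α + 1) / α) ≤ 0 :=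
      div_nonpos_of_nonneg_of_nonpos (by linarith) (by linarith)
    have ht : 0 < t := by linarith
    exact div_nonpos_of_nonpos_of_nonneg
      (mul_nonpos_of_nonpos_of_nonneg hratio (by positivity)) (by positivity)

theorem stmt_14 (k : ℕ) (hk : 1 ≤ k) (α : ℝ) (hα : α ∈ Set.Ioo (0 : ℝ) 1) :
    ∫ t in (1 : ℝ)..(1 / α),
        Real.arctan (Real.sqrt ((1 - α * t) * (t - 1))) / t ^ (k + 1)
      = (1 / (2 * k)) *
        ∫ t in (1 : ℝ)..(1 / α),
          (1 / t ^ (k + 1)) * (((2 * t - (α + 1) / α) / (t - (α + 1) / α)) *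
            (1 / Real.sqrt ((1 - α * t) * (t - 1)))) := by
  have h1α : 1 ≤ 1 / α := by rw [le_div_iff₀ hα.1, one_mul]; exact hα.2.le
  rw [integral_div_pow_succ_eq_of_eq_zero (by omega) one_pos h1α (by fun_prop)
    (fun t ht => hasDerivAt_arctan_sqrt_mul_sub hα.1 ht)
    (intervalIntegrable_deriv_arctan_sqrt_mul_sub hα) (by simp)
    (by rw [mul_one_div_cancel hα.1.ne', sub_self, zero_mul, sqrt_zero, arctan_zero]),
    ← intervalIntegral.integral_const_mul, ← intervalIntegral.integral_const_mul]
  congr 1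
  funext t
  field_simp
  ring
end

section
/- For α ∈ (α*, 1) where α* is the unique real root in (0,1) of 64α³ − 107α² + 62α − 11 = 0, the cubic R_α(w) = w³ − 8w² + 8(3−2α)w + 16(α−1) has three distinct real roots; for α ∈ (0, α*) it has one real root and a pair of complex-conjugate non-real roots. -/
private lemma aux1 (X Y : ℝ) (h0 : 0 ≤ X) (h : Y^2 < X^2) : 0 < X + Y ∧ Y - X < 0 := by
  constructor <;> nlinarith [h0, h, sq_nonneg (X+Y), sq_nonneg (X-Y)]

private lemma ivt_root (B C : ℝ) (a b : ℝ) (hab : a ≤ b)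
    (h1 : a^3 - 8*a^2 + B*a + C ≤ 0) (h2 : 0 ≤ b^3 - 8*b^2 + B*b + C) :
    ∃ r, a ≤ r ∧ r ≤ b ∧ r^3 - 8*r^2 + B*r + C = 0 := by
  have hc : ContinuousOn (fun w : ℝ => w^3 - 8*w^2 + B*w + C) (Set.Icc a b) := by fun_prop
  obtain ⟨r, hr, hr0⟩ := intermediate_value_Icc hab hc
    (Set.mem_Icc.2 ⟨h1, h2⟩ : (0:ℝ) ∈ Set.Icc _ _)
  exact ⟨r, hr.1, hr.2, hr0⟩

private lemma ivt_root' (B C : ℝ) (a b : ℝ) (hab : a ≤ b)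
    (h1 : 0 ≤ a^3 - 8*a^2 + B*a + C) (h2 : b^3 - 8*b^2 + B*b + C ≤ 0) :
    ∃ r, a ≤ r ∧ r ≤ b ∧ r^3 - 8*r^2 + B*r + C = 0 := by
  have hc : ContinuousOn (fun w : ℝ => w^3 - 8*w^2 + B*w + C) (Set.Icc a b) := by fun_prop
  obtain ⟨r, hr, hr0⟩ := intermediate_value_Icc' hab hc
    (Set.mem_Icc.2 ⟨h2, h1⟩ : (0:ℝ) ∈ Set.Icc _ _)
  exact ⟨r, hr.1, hr.2, hr0⟩

set_option maxHeartbeats 2000000 in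
theorem stmt_18 (αstar : ℝ) (hαs : αstar ∈ Set.Ioo (0 : ℝ) 1)
    (hroot : 64 * αstar ^ 3 - 107 * αstar ^ 2 + 62 * αstar - 11 = 0) :
    (∀ α ∈ Set.Ioo αstar (1 : ℝ), ∃ w₁ w₂ w₃ : ℝ,
        w₁ ≠ w₂ ∧ w₁ ≠ w₃ ∧ w₂ ≠ w₃ ∧
        ∀ w : ℂ, w ^ 3 - 8 * w ^ 2 + 8 * (3 - 2 * (α : ℂ)) * w + 16 * ((α : ℂ) - 1)
          = (w - (w₁ : ℂ)) * (w - (w₂ : ℂ)) * (w - (w₃ : ℂ))) ∧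
    (∀ α ∈ Set.Ioo (0 : ℝ) αstar, ∃ w₁ : ℝ, ∃ z : ℂ, z.im ≠ 0 ∧
        ∀ w : ℂ, w ^ 3 - 8 * w ^ 2 + 8 * (3 - 2 * (α : ℂ)) * w + 16 * ((α : ℂ) - 1)
          = (w - (w₁ : ℂ)) * (w - z) * (w - (starRingEnd ℂ) z)) := by
  obtain ⟨hs0, hs1⟩ := hαs
  constructor
  · rintro α ⟨ha1, ha2⟩
    -- the discriminant factor is positive
    have hQ : 0 < 48*(α+αstar)^2 + 16*(α-αstar)^2 - 107*(α+αstar) + 62 := by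
      nlinarith [sq_nonneg (96*(α+αstar) - 107), sq_nonneg (α - αstar)]
    have hf : 0 < 64*α^3 - 107*α^2 + 62*α - 11 := by
      nlinarith [mul_pos (sub_pos.2 ha1) hQ, hroot]
    clear hQ
    have h16 : (1:ℝ)/6 < α := by
      nlinarith [hf, sq_nonneg (96*(α+1/6) - 107), sq_nonneg (α - 1/6)]
    have h48 : (0:ℝ) ≤ 48*α - 8 := by linarith
    obtain ⟨s, hu0, hs2⟩ : ∃ s : ℝ, 0 ≤ s ∧ s^2 = 48*α - 8 :=
      ⟨Real.sqrt (48*α - 8), Real.sqrt_nonneg _, Real.sq_sqrt h48⟩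
    have hs7 : s < 7 := by nlinarith [hs2, hu0, ha2]
    have hX2 : (2*s*(48*α-8))^2 = 4*(48*α-8)^3 := by
      linear_combination (4*(48*α-8)^2) * hs2
    have hXnn : 0 ≤ 2*s*(48*α-8) := by positivity
    have hgap : 4*(48*α-8)^3 - (272-720*α)^2 = 6912*(64*α^3-107*α^2+62*α-11) := by ring
    have hY2 : (272-720*α)^2 < (2*s*(48*α-8))^2 := by rw [hX2]; linarith
    obtain ⟨hA', hB'⟩ := aux1 _ _ hXnn hY2
    have hA : 0 < 272 - 720*α + 2*s*(48*α-8) := by linarith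
    have hB : 272 - 720*α - 2*s*(48*α-8) < 0 := by linarith
    clear hX2 hgap hY2 hA' hB' hXnn
    -- values of the cubic at the four test points
    have hv0 : (-10:ℝ)^3 - 8*(-10)^2 + (8*(3-2*α))*(-10) + (16*(α-1)) ≤ 0 := by nlinarith [ha2]
    have hval1 : (8/3 - s/3)^3 - 8*(8/3 - s/3)^2 + (8*(3-2*α))*(8/3 - s/3) + (16*(α-1))
        = (272 - 720*α + 2*s*(48*α-8))/27 := by
      linear_combination (-(s/27)) * hs2
    have hval2 : (8/3 + s/3)^3 - 8*(8/3 + s/3)^2 + (8*(3-2*α))*(8/3 + s/3) + (16*(α-1))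
        = (272 - 720*α - 2*s*(48*α-8))/27 := by
      linear_combination (s/27) * hs2
    have hv1 : 0 < (8/3 - s/3)^3 - 8*(8/3 - s/3)^2 + (8*(3-2*α))*(8/3 - s/3) + (16*(α-1)) := by
      rw [hval1]; linarith
    have hv2 : (8/3 + s/3)^3 - 8*(8/3 + s/3)^2 + (8*(3-2*α))*(8/3 + s/3) + (16*(α-1)) < 0 := by
      rw [hval2]; linarith
    have hv3 : 0 ≤ (10:ℝ)^3 - 8*10^2 + (8*(3-2*α))*10 + (16*(α-1)) := by nlinarith [ha2]
    obtain ⟨r₁, hr₁a, hr₁b, hP1⟩ :=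
      ivt_root (8*(3-2*α)) (16*(α-1)) (-10) (8/3 - s/3) (by linarith) hv0 hv1.le
    obtain ⟨r₂, hr₂a, hr₂b, hP2⟩ :=
      ivt_root' (8*(3-2*α)) (16*(α-1)) (8/3 - s/3) (8/3 + s/3) (by linarith) hv1.le hv2.le
    obtain ⟨r₃, hr₃a, hr₃b, hP3⟩ :=
      ivt_root (8*(3-2*α)) (16*(α-1)) (8/3 + s/3) 10 (by linarith) hv2.le hv3
    -- strict separation
    have hr1lt : r₁ < 8/3 - s/3 :=
      hr₁b.lt_of_ne (fun h => by rw [h] at hP1; linarith)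
    have hr2lt : r₂ < 8/3 + s/3 :=
      hr₂b.lt_of_ne (fun h => by rw [h] at hP2; linarith)
    have h12 : r₁ < r₂ := lt_of_lt_of_le hr1lt hr₂a
    have h23 : r₂ < r₃ := lt_of_lt_of_le hr2lt hr₃a
    have h13 : r₁ < r₃ := h12.trans h23
    -- Vieta's formulas
    have hS12 : r₁^2 + r₁*r₂ + r₂^2 - 8*(r₁+r₂) + 8*(3-2*α) = 0 := by
      have h : (r₁ - r₂) * (r₁^2 + r₁*r₂ + r₂^2 - 8*(r₁+r₂) + 8*(3-2*α)) = 0 := by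
        linear_combination hP1 - hP2
      exact (mul_eq_zero.1 h).resolve_left (sub_ne_zero.2 h12.ne)
    have hS13 : r₁^2 + r₁*r₃ + r₃^2 - 8*(r₁+r₃) + 8*(3-2*α) = 0 := by
      have h : (r₁ - r₃) * (r₁^2 + r₁*r₃ + r₃^2 - 8*(r₁+r₃) + 8*(3-2*α)) = 0 := by
        linear_combination hP1 - hP3
      exact (mul_eq_zero.1 h).resolve_left (sub_ne_zero.2 h13.ne)
    have he1 : r₁ + r₂ + r₃ = 8 := by
      have h : (r₂ - r₃) * (r₁ + r₂ + r₃ - 8) = 0 := by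
        linear_combination hS12 - hS13
      have := (mul_eq_zero.1 h).resolve_left (sub_ne_zero.2 h23.ne)
      linarith [sub_eq_zero.1 this]
    have he2 : r₁*r₂ + r₁*r₃ + r₂*r₃ = 8*(3-2*α) := by
      linear_combination (r₁+r₂) * he1 - hS12
    have he3 : r₁*r₂*r₃ = 16 - 16*α := by
      linear_combination hP1 + r₁ * he2 - r₁^2 * he1
    refine ⟨r₁, r₂, r₃, h12.ne, h13.ne, h23.ne, fun w => ?_⟩
    have c1 : (r₁:ℂ) + r₂ + r₃ = 8 := by exact_mod_cast he1
    have c2 : (r₁:ℂ)*r₂ + (r₁:ℂ)*r₃ + (r₂:ℂ)*r₃ = 8*(3-2*(α:ℂ)) := by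
      exact_mod_cast congrArg Complex.ofReal he2
    have c3 : (r₁:ℂ)*r₂*r₃ = 16 - 16*(α:ℂ) := by
      exact_mod_cast congrArg Complex.ofReal he3
    linear_combination w^2 * c1 - w * c2 + c3
  · rintro α ⟨ha0, ha2⟩
    have hQ : 0 < 48*(α+αstar)^2 + 16*(α-αstar)^2 - 107*(α+αstar) + 62 := by
      nlinarith [sq_nonneg (96*(α+αstar) - 107), sq_nonneg (α - αstar)]
    have hf : 64*α^3 - 107*α^2 + 62*α - 11 < 0 := by
      nlinarith [mul_pos (sub_pos.2 ha2) hQ, hroot]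
    clear hQ
    have ha1 : α < 1 := ha2.trans hs1
    have hv0 : (-10:ℝ)^3 - 8*(-10)^2 + (8*(3-2*α))*(-10) + (16*(α-1)) ≤ 0 := by nlinarith [ha1]
    have hv3 : 0 ≤ (10:ℝ)^3 - 8*10^2 + (8*(3-2*α))*10 + (16*(α-1)) := by nlinarith [ha1]
    obtain ⟨w₁, _, _, hP1⟩ :=
      ivt_root (8*(3-2*α)) (16*(α-1)) (-10) 10 (by norm_num) hv0 hv3
    have hDid : (-3*w₁^2 + 16*w₁ - 32 + 64*α) * (3*w₁^2 - 16*w₁ + 24 - 16*α)^2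
        = 256*(64*α^3 - 107*α^2 + 62*α - 11) := by
      linear_combination (-27*w₁^3 + 216*w₁^2 + (432*α - 648)*w₁ - 1872*α + 976) * hP1
    have hDneg : -3*w₁^2 + 16*w₁ - 32 + 64*α < 0 := by
      by_contra h
      push_neg at h
      nlinarith [mul_nonneg h (sq_nonneg (3*w₁^2 - 16*w₁ + 24 - 16*α)), hDid, hf]
    obtain ⟨b, hbpos, hb2⟩ : ∃ b : ℝ, 0 < b ∧ b^2 = 3*w₁^2 - 16*w₁ + 32 - 64*α :=
      ⟨Real.sqrt (3*w₁^2 - 16*w₁ + 32 - 64*α), Real.sqrt_pos.2 (by linarith),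
        Real.sq_sqrt (by linarith)⟩
    refine ⟨w₁, ((8-w₁)/2 : ℝ) + ((b/2 : ℝ) : ℂ) * Complex.I, ?_, fun w => ?_⟩
    · simp only [Complex.add_im, Complex.ofReal_im, Complex.mul_im, Complex.ofReal_re,
        Complex.I_im, Complex.I_re, mul_zero, mul_one, zero_add]
      positivity
    · have hconj : (starRingEnd ℂ) (((8-w₁)/2 : ℝ) + ((b/2 : ℝ) : ℂ) * Complex.I)
          = ((8-w₁)/2 : ℝ) - ((b/2 : ℝ) : ℂ) * Complex.I := by
        rw [map_add, map_mul, Complex.conj_ofReal, Complex.conj_ofReal, Complex.conj_I]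
        ring
      rw [hconj]
      have hP1c : (w₁:ℂ)^3 - 8*(w₁:ℂ)^2 + (8*(3-2*(α:ℂ)))*(w₁:ℂ) + (16*((α:ℂ)-1)) = 0 := by
        exact_mod_cast congrArg Complex.ofReal hP1
      have hb2c : ((b:ℝ):ℂ)^2 = 3*(w₁:ℂ)^2 - 16*(w₁:ℂ) + 32 - 64*(α:ℂ) := by
        exact_mod_cast congrArg Complex.ofReal hb2
      push_cast
      linear_combination hP1c + ((w - (w₁:ℂ)) * (b:ℂ)^2 / 4) * Complex.I_sq
        - ((w - (w₁:ℂ)) / 4) * hb2c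
end
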